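/- Let f : ℂ → ℂ be holomorphic and define m : ℝ² → ℝ³ by m(x,y) = (2 Re f(ζ), 2 Im f(ζ), 1 − |f(ζ)|²)/(1 + |f(ζ)|²) with ζ = x + iy. Then |m(x,y)| = 1 for all (x,y), and m is a harmonic map into S², i.e. Δm + |∇m|² m = 0. -/

import Mathlib

/-!
Write `m = Φ ∘ f` with `Φ = invStereo` the inverse stereographic projection. For holomorphic
`h`, the real derivative of `h` at `z` is multiplication by `h' z`, a rotation-dilation; so the
Hessian trace over the frame `(h', i h')` is `|h'|²` times the one over `(1, i)`, while the terms
`Dg (h'' v²)` cancel between `v = 1` and `v = i`. Hence `Δ(g ∘ h) = |h'|² (Δg) ∘ h` and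
`|∇(g ∘ h)|² = |h'|² |∇g|² ∘ h`, so `Δm + |∇m|² m` is `|f'|²` times the same expression for `Φ`.
For `Φ` itself a direct computation with `ρ = (1 + |w|²)⁻¹` gives `ΔΦ = -8ρ²Φ` and `|∇Φ|² = 8ρ²`.
-/

noncomputable section
open Complex

/-- planar Laplacian of a function on ℝ² -/
def lap (g : ℝ × ℝ → ℝ) (p : ℝ × ℝ) : ℝ :=
  fderiv ℝ (fun q => fderiv ℝ g q (1, 0)) p (1, 0)
    + fderiv ℝ (fun q => fderiv ℝ g q (0, 1)) p (0, 1)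

/-- squared gradient of a function on ℝ² -/
def gradSq (g : ℝ × ℝ → ℝ) (p : ℝ × ℝ) : ℝ :=
  (fderiv ℝ g p (1, 0)) ^ 2 + (fderiv ℝ g p (0, 1)) ^ 2

/-- m = (2 Re f, 2 Im f, 1 − |f|²)/(1 + |f|²) with ζ = x + iy -/
def mf (f : ℂ → ℂ) (p : ℝ × ℝ) : Fin 3 → ℝ :=
  ![2 * (f (p.1 + p.2 * I)).re / (1 + ‖f (p.1 + p.2 * I)‖ ^ 2),
    2 * (f (p.1 + p.2 * I)).im / (1 + ‖f (p.1 + p.2 * I)‖ ^ 2),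
    (1 - ‖f (p.1 + p.2 * I)‖ ^ 2) / (1 + ‖f (p.1 + p.2 * I)‖ ^ 2)]

section

variable {F : Type*} [NormedAddCommGroup F] [NormedSpace ℝ F]

def lapC (g : ℂ → F) (z : ℂ) : F :=
  fderiv ℝ (fun w => fderiv ℝ g w 1) z 1 + fderiv ℝ (fun w => fderiv ℝ g w I) z I

def gradSqC (g : ℂ → ℝ) (z : ℂ) : ℝ :=
  fderiv ℝ g z 1 ^ 2 + fderiv ℝ g z I ^ 2

theorem lap_comp_equivRealProdCLM_symm (g : ℂ → ℝ) (p : ℝ × ℝ) :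
    lap (g ∘ equivRealProdCLM.symm) p = lapC g (equivRealProdCLM.symm p) := by
  have hdir : ∀ v : ℝ × ℝ, (fun q => fderiv ℝ (g ∘ equivRealProdCLM.symm) q v) =
      (fun w => fderiv ℝ g w (equivRealProdCLM.symm v)) ∘ equivRealProdCLM.symm := by
    intro v; funext q
    rw [ContinuousLinearEquiv.comp_right_fderiv]; rfl
  rw [lap, hdir, hdir, ContinuousLinearEquiv.comp_right_fderiv,
    ContinuousLinearEquiv.comp_right_fderiv]
  simp [lapC, equivRealProdCLM_symm_apply]

theorem gradSq_comp_equivRealProdCLM_symm (g : ℂ → ℝ) (p : ℝ × ℝ) :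
    gradSq (g ∘ equivRealProdCLM.symm) p = gradSqC g (equivRealProdCLM.symm p) := by
  simp [gradSq, gradSqC, ContinuousLinearEquiv.comp_right_fderiv, equivRealProdCLM_symm_apply]

theorem bilinear_apply_self_add_mul_I (B : ℂ →L[ℝ] ℂ →L[ℝ] F) (a : ℂ) :
    B a a + B (a * I) (a * I) = ‖a‖ ^ 2 • (B 1 1 + B I I) := by
  obtain ⟨x, y⟩ := a
  have ha : (⟨x, y⟩ : ℂ) = x • (1 : ℂ) + y • I := by simp [Complex.ext_iff]
  have haI : (⟨x, y⟩ : ℂ) * I = (-y) • (1 : ℂ) + x • I := by simp [Complex.ext_iff]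
  rw [haI, Complex.sq_norm, Complex.normSq_mk, ha]
  simp only [map_add, map_smul, add_apply, smul_apply]
  module

theorem fderiv_apply_eq_fderiv_fderiv {g : ℂ → F} {x : ℂ}
    (hg : DifferentiableAt ℝ (fderiv ℝ g) x) (v e : ℂ) :
    fderiv ℝ (fun w => fderiv ℝ g w v) x e = fderiv ℝ (fderiv ℝ g) x e v := by
  rw [fderiv_clm_apply hg (differentiableAt_const v)]
  simp

theorem lapC_eq_fderiv_fderiv {g : ℂ → F} {x : ℂ} (hg : DifferentiableAt ℝ (fderiv ℝ g) x) :
    lapC g x = fderiv ℝ (fderiv ℝ g) x 1 1 + fderiv ℝ (fderiv ℝ g) x I I := by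
  rw [lapC, fderiv_apply_eq_fderiv_fderiv hg, fderiv_apply_eq_fderiv_fderiv hg]

variable {h : ℂ → ℂ}

theorem fderiv_comp_holomorphic_apply {g : ℂ → F} {w : ℂ} (hg : DifferentiableAt ℝ g (h w))
    (hh : DifferentiableAt ℂ h w) (v : ℂ) :
    fderiv ℝ (g ∘ h) w v = fderiv ℝ g (h w) (deriv h w * v) := by
  rw [(hg.hasFDerivAt.comp w hh.hasDerivAt.complexToReal_fderiv).fderiv]
  simp

theorem gradSqC_comp_holomorphic {g : ℂ → ℝ} {z : ℂ} (hg : DifferentiableAt ℝ g (h z))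
    (hh : DifferentiableAt ℂ h z) :
    gradSqC (g ∘ h) z = ‖deriv h z‖ ^ 2 * gradSqC g (h z) := by
  have := bilinear_apply_self_add_mul_I
    ((ContinuousLinearMap.mul ℝ ℝ).bilinearComp (fderiv ℝ g (h z)) (fderiv ℝ g (h z))) (deriv h z)
  simp only [ContinuousLinearMap.bilinearComp_apply, ContinuousLinearMap.mul_apply',
    smul_eq_mul] at this
  simp only [gradSqC, fderiv_comp_holomorphic_apply hg hh, mul_one, pow_two, this]

theorem lapC_comp_holomorphic {g : ℂ → F} {z : ℂ} (hg : Differentiable ℝ g)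
    (hg₂ : DifferentiableAt ℝ (fderiv ℝ g) (h z)) (hh : Differentiable ℂ h) :
    lapC (g ∘ h) z = ‖deriv h z‖ ^ 2 • lapC g (h z) := by
  set B := fderiv ℝ (fderiv ℝ g) (h z)
  set a := deriv h z
  have hdir : ∀ v : ℂ, fderiv ℝ (fun w => fderiv ℝ (g ∘ h) w v) z v =
      fderiv ℝ g (h z) (v * (deriv (deriv h) z * v)) + B (a * v) (a * v) := by
    intro v
    have hc := hg₂.hasFDerivAt.comp z (hh z).hasDerivAt.complexToReal_fderiv
    have hu := ((hh.deriv z).hasDerivAt.complexToReal_fderiv).mul_const' v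
    simp only [fderiv_comp_holomorphic_apply (hg _) (hh _)]
    have hd : HasFDerivAt (fun w => fderiv ℝ g (h w) (deriv h w * v)) _ z := hc.clm_apply hu
    rw [hd.fderiv]
    simp [B, a]
  have hcancel : ∀ c : ℂ, (1 : ℂ) * (c * 1) + I * (c * I) = 0 := fun c => by
    linear_combination c * I_sq
  rw [lapC, hdir, hdir, add_add_add_comm, ← map_add, hcancel, map_zero, zero_add, mul_one,
    bilinear_apply_self_add_mul_I, lapC_eq_fderiv_fderiv hg₂]

end

/-- The tension field of `Φ` regarded as a map into the unit sphere of `ι → ℝ`. -/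
def sphereTension {ι : Type*} [Fintype ι] (Φ : ℂ → ι → ℝ) (w : ℂ) (i : ι) : ℝ :=
  lapC (fun v => Φ v i) w + (∑ j, gradSqC (fun v => Φ v j) w) * Φ w i

theorem sphereTension_comp_holomorphic {ι : Type*} [Fintype ι] {Φ : ℂ → ι → ℝ} {h : ℂ → ℂ}
    (hΦ : ∀ j, ContDiff ℝ 2 fun v => Φ v j) (hh : Differentiable ℂ h) (z : ℂ) (i : ι) :
    sphereTension (Φ ∘ h) z i = ‖deriv h z‖ ^ 2 * sphereTension Φ (h z) i := by
  have hdiff : ∀ j, Differentiable ℝ fun v => Φ v j :=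
    fun j => (hΦ j).differentiable (by norm_num)
  have hdiff₂ : ∀ j, Differentiable ℝ (fderiv ℝ fun v => Φ v j) :=
    fun j => ((hΦ j).fderiv_right (m := 1) (by norm_num)).differentiable (by norm_num)
  have hgrad : ∀ j, gradSqC (fun v => (Φ ∘ h) v j) z =
      ‖deriv h z‖ ^ 2 * gradSqC (fun v => Φ v j) (h z) :=
    fun j => gradSqC_comp_holomorphic (g := fun v => Φ v j) (hdiff j _) (hh z)
  simp only [sphereTension, hgrad, ← Finset.mul_sum]
  rw [show (fun v => (Φ ∘ h) v i) = (fun v => Φ v i) ∘ h from rfl,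
    lapC_comp_holomorphic (hdiff i) (hdiff₂ i _) hh, smul_eq_mul, Function.comp_apply]
  ring

def HasPartialsAt (g : ℂ → ℝ) (gx gy : ℝ) (w : ℂ) : Prop :=
  HasFDerivAt g (gx • reCLM + gy • imCLM) w

namespace HasPartialsAt

variable {g k : ℂ → ℝ} {gx gy kx ky : ℝ} {w : ℂ}

theorem of_hasFDerivAt {L : ℂ →L[ℝ] ℝ} (hL : HasFDerivAt g L w) :
    HasPartialsAt g (L 1) (L I) w := by
  have hdecomp : L = L 1 • reCLM + L I • imCLM := by
    ext v
    have hv : v = v.re • (1 : ℂ) + v.im • I := by simp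
    conv_lhs => rw [hv, map_add, map_smul, map_smul]
    simp [mul_comm]
  unfold HasPartialsAt
  rwa [← hdecomp]

theorem fderiv_one (hg : HasPartialsAt g gx gy w) : fderiv ℝ g w 1 = gx := by
  simp [hg.fderiv]

theorem fderiv_I (hg : HasPartialsAt g gx gy w) : fderiv ℝ g w I = gy := by
  simp [hg.fderiv]

theorem congr (hg : HasPartialsAt g gx gy w) {gx' gy' : ℝ} (hx : gx = gx') (hy : gy = gy') :
    HasPartialsAt g gx' gy' w :=
  hx ▸ hy ▸ hg

theorem re : HasPartialsAt re 1 0 w :=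
  (of_hasFDerivAt (reCLM.hasFDerivAt (x := w))).congr (by simp) (by simp)

theorem im : HasPartialsAt im 0 1 w :=
  (of_hasFDerivAt (imCLM.hasFDerivAt (x := w))).congr (by simp) (by simp)

theorem const (c : ℝ) : HasPartialsAt (fun _ => c) 0 0 w :=
  (of_hasFDerivAt (hasFDerivAt_const c w)).congr (by simp) (by simp)

protected theorem add (hg : HasPartialsAt g gx gy w) (hk : HasPartialsAt k kx ky w) :
    HasPartialsAt (fun v => g v + k v) (gx + kx) (gy + ky) w :=
  (of_hasFDerivAt (HasFDerivAt.add hg hk)).congr (by simp) (by simp)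

protected theorem sub (hg : HasPartialsAt g gx gy w) (hk : HasPartialsAt k kx ky w) :
    HasPartialsAt (fun v => g v - k v) (gx - kx) (gy - ky) w :=
  (of_hasFDerivAt (HasFDerivAt.sub hg hk)).congr (by simp) (by simp)

protected theorem mul (hg : HasPartialsAt g gx gy w) (hk : HasPartialsAt k kx ky w) :
    HasPartialsAt (fun v => g v * k v) (g w * kx + k w * gx) (g w * ky + k w * gy) w :=
  (of_hasFDerivAt (HasFDerivAt.mul hg hk)).congr (by simp) (by simp)

end HasPartialsAt

def invOneAddNormSq (w : ℂ) : ℝ := (1 + ‖w‖ ^ 2)⁻¹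

theorem invOneAddNormSq_mul (w : ℂ) : invOneAddNormSq w * (1 + w.re ^ 2 + w.im ^ 2) = 1 := by
  rw [invOneAddNormSq, Complex.sq_norm, Complex.normSq_apply, add_assoc, ← sq, ← sq]
  exact inv_mul_cancel₀ (by positivity)

theorem hasPartialsAt_invOneAddNormSq (w : ℂ) :
    HasPartialsAt invOneAddNormSq (-2 * w.re * invOneAddNormSq w ^ 2)
      (-2 * w.im * invOneAddNormSq w ^ 2) w := by
  have hN := ((hasFDerivAt_id w).norm_sq).const_add 1
  refine (HasPartialsAt.of_hasFDerivAt
    ((hasDerivAt_inv (by positivity)).comp_hasFDerivAt w hN)).congr ?_ ?_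
  · simp [invOneAddNormSq]; ring
  · simp [invOneAddNormSq]; ring

theorem lapC_eq_of_hasPartialsAt {g X Y : ℂ → ℝ} {w : ℂ} {a b c d : ℝ}
    (hg : ∀ v, HasPartialsAt g (X v) (Y v) v) (hX : HasPartialsAt X a b w)
    (hY : HasPartialsAt Y c d w) : lapC g w = a + d := by
  have hX' : (fun v => fderiv ℝ g v 1) = X := funext fun v => (hg v).fderiv_one
  have hY' : (fun v => fderiv ℝ g v I) = Y := funext fun v => (hg v).fderiv_I
  rw [lapC, hX', hY', hX.fderiv_one, hY.fderiv_I]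

theorem gradSqC_eq_of_hasPartialsAt {g : ℂ → ℝ} {gx gy : ℝ} {w : ℂ}
    (hg : HasPartialsAt g gx gy w) : gradSqC g w = gx ^ 2 + gy ^ 2 := by
  rw [gradSqC, hg.fderiv_one, hg.fderiv_I]

def invStereo (w : ℂ) : Fin 3 → ℝ :=
  ![2 * w.re / (1 + ‖w‖ ^ 2), 2 * w.im / (1 + ‖w‖ ^ 2), (1 - ‖w‖ ^ 2) / (1 + ‖w‖ ^ 2)]

theorem mf_eq_invStereo (f : ℂ → ℂ) (p : ℝ × ℝ) : mf f p = invStereo (f (p.1 + p.2 * I)) := rfl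

theorem invStereo_zero : (fun w => invStereo w 0) = fun w => 2 * w.re * invOneAddNormSq w := by
  funext w; simp [invStereo, invOneAddNormSq, div_eq_mul_inv]

theorem invStereo_one : (fun w => invStereo w 1) = fun w => 2 * w.im * invOneAddNormSq w := by
  funext w; simp [invStereo, invOneAddNormSq, div_eq_mul_inv]

theorem invStereo_two : (fun w => invStereo w 2) = fun w => 2 * invOneAddNormSq w - 1 := by
  funext w
  have hpos : 1 + ‖w‖ ^ 2 ≠ 0 := by positivity
  simp only [invStereo, invOneAddNormSq, Matrix.cons_val_two, Matrix.tail_cons, Matrix.head_cons]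
  field_simp
  ring

theorem sum_invStereo_sq (w : ℂ) : ∑ i, invStereo w i ^ 2 = 1 := by
  have hpos : 1 + ‖w‖ ^ 2 ≠ 0 := by positivity
  simp only [invStereo, Fin.sum_univ_three, Matrix.cons_val_zero, Matrix.cons_val_one,
    Matrix.cons_val_two, Matrix.head_cons, Matrix.tail_cons, Complex.sq_norm,
    Complex.normSq_apply] at hpos ⊢
  field_simp
  ring

theorem contDiff_invStereo (i : Fin 3) : ContDiff ℝ 2 (fun w => invStereo w i) := by
  have hρ : ContDiff ℝ 2 invOneAddNormSq :=
    (contDiff_const.add (contDiff_norm_sq ℝ)).inv fun w => by positivity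
  have hre : ContDiff ℝ 2 re := reCLM.contDiff
  have him : ContDiff ℝ 2 im := imCLM.contDiff
  match i with
  | 0 => rw [invStereo_zero]; fun_prop
  | 1 => rw [invStereo_one]; fun_prop
  | 2 => rw [invStereo_two]; fun_prop

section InvStereo

open HasPartialsAt

local notation "ρ" => invOneAddNormSq

theorem hasPartialsAt_invStereo_zero (w : ℂ) :
    HasPartialsAt (fun v => invStereo v 0) (2 * ρ w - 4 * (w.re * w.re) * (ρ w * ρ w))
      (-4 * (w.re * w.im) * (ρ w * ρ w)) w := by
  rw [invStereo_zero]
  exact (((const 2).mul re).mul (hasPartialsAt_invOneAddNormSq w)).congr (by ring) (by ring)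

theorem hasPartialsAt_invStereo_one (w : ℂ) :
    HasPartialsAt (fun v => invStereo v 1) (-4 * (w.re * w.im) * (ρ w * ρ w))
      (2 * ρ w - 4 * (w.im * w.im) * (ρ w * ρ w)) w := by
  rw [invStereo_one]
  exact (((const 2).mul im).mul (hasPartialsAt_invOneAddNormSq w)).congr (by ring) (by ring)

theorem hasPartialsAt_invStereo_two (w : ℂ) :
    HasPartialsAt (fun v => invStereo v 2) (-4 * w.re * (ρ w * ρ w))
      (-4 * w.im * (ρ w * ρ w)) w := by
  rw [invStereo_two]
  exact (((const 2).mul (hasPartialsAt_invOneAddNormSq w)).sub (const 1)).congr (by ring) (by ring)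

theorem sum_gradSqC_invStereo (w : ℂ) :
    ∑ j, gradSqC (fun v => invStereo v j) w = 8 * ρ w ^ 2 := by
  rw [Fin.sum_univ_three, gradSqC_eq_of_hasPartialsAt (hasPartialsAt_invStereo_zero w),
    gradSqC_eq_of_hasPartialsAt (hasPartialsAt_invStereo_one w),
    gradSqC_eq_of_hasPartialsAt (hasPartialsAt_invStereo_two w)]
  linear_combination 16 * (w.re ^ 2 + w.im ^ 2) * ρ w ^ 3 * invOneAddNormSq_mul w

theorem lapC_invStereo (w : ℂ) (i : Fin 3) :
    lapC (fun v => invStereo v i) w = -8 * ρ w ^ 2 * invStereo w i := by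
  have R := hasPartialsAt_invOneAddNormSq w
  match i with
  | 0 =>
    rw [lapC_eq_of_hasPartialsAt hasPartialsAt_invStereo_zero
      (((const 2).mul R).sub (((const 4).mul (re.mul re)).mul (R.mul R)))
      (((const (-4)).mul (re.mul im)).mul (R.mul R)), congrFun invStereo_zero w]
    linear_combination 16 * w.re * ρ w ^ 2 * invOneAddNormSq_mul w
  | 1 =>
    rw [lapC_eq_of_hasPartialsAt hasPartialsAt_invStereo_one
      (((const (-4)).mul (re.mul im)).mul (R.mul R))
      (((const 2).mul R).sub (((const 4).mul (im.mul im)).mul (R.mul R))),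
      congrFun invStereo_one w]
    linear_combination 16 * w.im * ρ w ^ 2 * invOneAddNormSq_mul w
  | 2 =>
    rw [lapC_eq_of_hasPartialsAt hasPartialsAt_invStereo_two
      (((const (-4)).mul re).mul (R.mul R)) (((const (-4)).mul im).mul (R.mul R)),
      congrFun invStereo_two w]
    linear_combination 16 * ρ w ^ 2 * invOneAddNormSq_mul w

theorem sphereTension_invStereo (w : ℂ) (i : Fin 3) : sphereTension invStereo w i = 0 := by
  rw [sphereTension, lapC_invStereo, sum_gradSqC_invStereo]
  ring

end InvStereo

theorem holomorphic_gives_harmonic_map (f : ℂ → ℂ) (hf : Differentiable ℂ f) :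
    (∀ p : ℝ × ℝ, ∑ i, (mf f p i) ^ 2 = 1)
    ∧ (∀ p : ℝ × ℝ, ∀ i : Fin 3,
        lap (fun q => mf f q i) p
          + (∑ j, gradSq (fun q => mf f q j) p) * mf f p i = 0) := by
  refine ⟨fun p => sum_invStereo_sq _, fun p i => ?_⟩
  have hmf : ∀ j,
      (fun q => mf f q j) = (fun w => (invStereo ∘ f) w j) ∘ equivRealProdCLM.symm :=
    fun j => funext fun q => by simp [mf_eq_invStereo, equivRealProdCLM_symm_apply]
  rw [mf_eq_invStereo, ← equivRealProdCLM_symm_apply]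
  simp only [hmf, lap_comp_equivRealProdCLM_symm, gradSq_comp_equivRealProdCLM_symm]
  exact (sphereTension_comp_holomorphic contDiff_invStereo hf _ i).trans
    (by rw [sphereTension_invStereo, mul_zero])
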